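/- arXiv:1901.03672 — 2 statements merged into one kernel-verified Lean document; each statement's English description precedes it below -/
import Mathlib

section
/- Let a,b,c,d,e,α ∈ ℂ and let (P_m)_{m∈ℕ} be a sequence of polynomials over ℂ such that each P_m has degree m with leading coefficient i^m·k_m where k_m ≠ 0, and such that for every m the function y_m(x) := P_m.eval(x) satisfies (a·x² + b·x + c)·(δ(δy_m))(x) + (d·x + e)·(𝒮(δy_m))(x) − m·((m−1)·a + d)·y_m(x) = 0 for all x ∈ ℂ. Fix n ≥ 1, assume (2an−2a+d)·(2an+d)·(2an−a+d)·(2an−3a+d) ≠ 0, and assume there exist A, B, C ∈ ℂ with P_{n+1}(x) = (A·x + B)·P_n(x) − C·P_{n−1}(x) for all x ∈ ℂ. Then A = i·k_{n+1}/k_n, B = i·(k_{n+1}/k_n)·[(2bn² − 2bn − 2e)a + d(2bn + e)] / [(2an − 2a + d)(2an + d)], and C = (k_{n+1}/k_{n−1})·n·{−8n(n−2)(n−1)⁴a⁵ + (−4(7n²−13n+2)(n−1)³d + 32cn(n−2)(n−1)²)a⁴ + (−8n(n−2)(n−1)²b² − 2(19n²−34n+10)(n−1)²d² + 16c(n−1)(5n²−9n+2)d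 + 8e²n(n−2))a³ + (−4(n−1)(5n²−9n+2)db² − 8en(n−2)db + (72n²−128n+48)d²c − (n−1)(5n−3)(5n−6)d³ + (12n−8)e²d)a² + (−4(4n−3)(n−1)d²b² + (−12n+8)ed²b + (28n−24)d³c − (8n−7)(n−1)d⁴ + 4e²d²)a + (−4n+4)d³b² − 4bd³e + (1−n)d⁵ + 4cd⁴} / [4(2an−2a+d)²(2an−3a+d)(2an+d)(2an−a+d)]. -/
open Complex

/-- Difference operator δ. -/
noncomputable def Dd (f : ℂ → ℂ) (x : ℂ) : ℂ :=
  (f (x + I/2) - f (x - I/2)) / I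

/-- Averaging operator. -/
noncomputable def Sd (f : ℂ → ℂ) (x : ℂ) : ℂ :=
  (f (x + I/2) + f (x - I/2)) / 2

namespace AuxRec
open Polynomial

noncomputable def TT (r : ℂ) (p : ℂ[X]) : ℂ[X] := p.comp (X + C r)

lemma TT_add (r : ℂ) (p q : ℂ[X]) : TT r (p + q) = TT r p + TT r q := add_comp
lemma TT_sub (r : ℂ) (p q : ℂ[X]) : TT r (p - q) = TT r p - TT r q := sub_comp
lemma TT_C_mul (r s : ℂ) (p : ℂ[X]) : TT r (C s * p) = C s * TT r p := by
  simp [TT, mul_comp]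
lemma TT_TT (r s : ℂ) (p : ℂ[X]) : TT r (TT s p) = TT (r + s) p := by
  simp only [TT, comp_assoc, add_comp, X_comp, C_comp]
  rw [add_assoc, ← C_add, add_comm r s]
lemma TT_zero (p : ℂ[X]) : TT 0 p = p := by simp [TT]
lemma TT_eval (r : ℂ) (p : ℂ[X]) (x : ℂ) : (TT r p).eval x = p.eval (x + r) := by
  simp [TT]

noncomputable def dP (p : ℂ[X]) : ℂ[X] := C (-I) * (TT (I/2) p - TT (-(I/2)) p)
noncomputable def sP (p : ℂ[X]) : ℂ[X] := C (2⁻¹ : ℂ) * (TT (I/2) p + TT (-(I/2)) p)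
noncomputable def DD (p : ℂ[X]) : ℂ[X] := TT I p + TT (-I) p - p - p
noncomputable def SD (p : ℂ[X]) : ℂ[X] := TT I p - TT (-I) p

lemma Dd_eval (p : ℂ[X]) : Dd (fun t => p.eval t) = fun x => (dP p).eval x := by
  funext x
  simp only [Dd, dP, eval_mul, eval_C, eval_sub, TT_eval, ← sub_eq_add_neg]
  rw [div_eq_iff Complex.I_ne_zero]
  linear_combination (p.eval (x + I/2) - p.eval (x - I/2)) * Complex.I_sq

lemma Sd_eval (p : ℂ[X]) : Sd (fun t => p.eval t) = fun x => (sP p).eval x := by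
  funext x
  simp only [Sd, sP, eval_mul, eval_C, eval_add, TT_eval, ← sub_eq_add_neg]
  ring

lemma dP_dP (p : ℂ[X]) : dP (dP p) = -DD p := by
  simp only [dP, DD, TT_C_mul, TT_sub, TT_TT]
  have h1 : I/2 + I/2 = I := by ring
  have h2 : -(I/2) + I/2 = 0 := by ring
  have h3 : I/2 + -(I/2) = 0 := by ring
  have h4 : -(I/2) + -(I/2) = -I := by ring
  rw [h1, h2, h3, h4, TT_zero]
  have h5 : (C (-I) : ℂ[X]) * C (-I) = -1 := by
    rw [← C_mul]; norm_num [Complex.I_mul_I]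
  linear_combination (TT I p - p - (p - TT (-I) p)) * h5

lemma sP_dP (p : ℂ[X]) : sP (dP p) = C (-(I/2)) * SD p := by
  simp only [dP, sP, SD, TT_C_mul, TT_sub, TT_TT]
  have h1 : I/2 + I/2 = I := by ring
  have h2 : -(I/2) + I/2 = 0 := by ring
  have h3 : I/2 + -(I/2) = 0 := by ring
  have h4 : -(I/2) + -(I/2) = -I := by ring
  rw [h1, h2, h3, h4, TT_zero]
  have h5 : (C (2⁻¹:ℂ)) * C (-I) = C (-(I/2)) := by rw [← C_mul]; congr 1; ring
  linear_combination (TT I p - p + (p - TT (-I) p)) * h5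

noncomputable def Qp (a b c d e : ℂ) (m : ℕ) (p : ℂ[X]) : ℂ[X] :=
  (C a * X^2 + C b * X + C c) * (-(DD p)) + (C d * X + C e) * (C (-(I/2)) * SD p)
    - C ((m:ℂ) * (((m:ℂ) - 1) * a + d)) * p

lemma Qzero (a b c d e : ℂ) (P : ℕ → ℂ[X])
    (hde : ∀ (m : ℕ) (x : ℂ),
      (a * x^2 + b * x + c) * Dd (Dd (fun t => (P m).eval t)) x
        + (d * x + e) * Sd (Dd (fun t => (P m).eval t)) x
        - (m : ℂ) * (((m : ℂ) - 1) * a + d) * (P m).eval x = 0)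
    (m : ℕ) : Qp a b c d e m (P m) = 0 := by
  apply Polynomial.funext
  intro x
  have h := hde m x
  rw [Dd_eval, Dd_eval, Sd_eval, dP_dP, sP_dP] at h
  simp only [eval_mul, eval_neg, eval_C] at h
  simp only [Qp, eval_add, eval_sub, eval_mul, eval_neg, eval_C, eval_X, eval_pow, eval_zero]
  linear_combination h

lemma choose_off (t j : ℕ) : (t+j).choose t = (t+j).choose j := by
  have h := Nat.choose_symm (show j ≤ t+j by omega)
  rwa [Nat.add_sub_cancel] at h

lemma cc2 (t : ℕ) : (((t+2).choose 2 : ℕ) : ℂ) = ((t:ℂ)+2)*((t:ℂ)+1)/2 := by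
  induction t with
  | zero => norm_num
  | succ m ih =>
    have h := Nat.choose_succ_succ (m+2) 1
    have h2 : (m+2).choose 1 = m+2 := Nat.choose_one_right _
    push_cast [show m+1+2 = (m+2)+1 from rfl, h, h2]
    push_cast at ih
    rw [ih]; ring

lemma cc3 (t : ℕ) : (((t+3).choose 3 : ℕ) : ℂ) = ((t:ℂ)+3)*((t:ℂ)+2)*((t:ℂ)+1)/6 := by
  induction t with
  | zero => norm_num
  | succ m ih =>
    have h := Nat.choose_succ_succ (m+3) 2
    push_cast [show m+1+3 = (m+3)+1 from rfl, h, cc2 (m+1), show m+1+2 = m+3 from rfl]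
    push_cast at ih
    rw [ih]; ring

lemma cc4 (t : ℕ) : (((t+4).choose 4 : ℕ) : ℂ) = ((t:ℂ)+4)*((t:ℂ)+3)*((t:ℂ)+2)*((t:ℂ)+1)/24 := by
  induction t with
  | zero => norm_num
  | succ m ih =>
    have h := Nat.choose_succ_succ (m+4) 3
    push_cast [show m+1+4 = (m+4)+1 from rfl, h, cc3 (m+1), show m+1+3 = m+4 from rfl]
    push_cast at ih
    rw [ih]; ring

lemma hI2 : (I:ℂ)^2 = -1 := Complex.I_sq
lemma hI3 : (I:ℂ)^3 = -I := by rw [pow_succ, hI2]; ring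
lemma hI4 : (I:ℂ)^4 = 1 := by rw [pow_succ, hI3]; simp [Complex.I_mul_I]

lemma coeff_TT_pow (r : ℂ) (k t : ℕ) :
    (TT r ((X:ℂ[X])^k)).coeff t = r^(k-t) * ((k.choose t : ℕ) : ℂ) := by
  simp [TT, X_pow_comp, coeff_X_add_C_pow]

lemma D0 (t : ℕ) : (DD ((X:ℂ[X])^t)).coeff t = 0 := by
  simp only [DD, coeff_add, coeff_sub, coeff_TT_pow, Nat.sub_self, pow_zero,
    Nat.choose_self, coeff_X_pow, if_pos rfl]
  norm_num

lemma D1 (t : ℕ) : (DD ((X:ℂ[X])^(t+1))).coeff t = 0 := by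
  simp only [DD, coeff_add, coeff_sub, coeff_TT_pow, Nat.add_sub_cancel_left, coeff_X_pow,
    if_neg (show ¬(t = t+1) by omega)]
  ring

lemma D2 (t : ℕ) : (DD ((X:ℂ[X])^(t+2))).coeff t = -(((t:ℂ)+2)*((t:ℂ)+1)) := by
  simp only [DD, coeff_add, coeff_sub, coeff_TT_pow, Nat.add_sub_cancel_left, coeff_X_pow,
    if_neg (show ¬(t = t+2) by omega), choose_off t 2, cc2]
  linear_combination (((t:ℂ)+2)*((t:ℂ)+1)) * hI2

lemma D3 (t : ℕ) : (DD ((X:ℂ[X])^(t+3))).coeff t = 0 := by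
  simp only [DD, coeff_add, coeff_sub, coeff_TT_pow, Nat.add_sub_cancel_left, coeff_X_pow,
    if_neg (show ¬(t = t+3) by omega)]
  ring

lemma D4 (t : ℕ) : (DD ((X:ℂ[X])^(t+4))).coeff t
    = ((t:ℂ)+4)*((t:ℂ)+3)*((t:ℂ)+2)*((t:ℂ)+1)/12 := by
  simp only [DD, coeff_add, coeff_sub, coeff_TT_pow, Nat.add_sub_cancel_left, coeff_X_pow,
    if_neg (show ¬(t = t+4) by omega), choose_off t 4, cc4]
  linear_combination (((t:ℂ)+4)*((t:ℂ)+3)*((t:ℂ)+2)*((t:ℂ)+1)/12) * hI4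

lemma S0 (t : ℕ) : (SD ((X:ℂ[X])^t)).coeff t = 0 := by
  simp only [SD, coeff_sub, coeff_TT_pow, Nat.sub_self, pow_zero, Nat.choose_self]
  ring

lemma S1 (t : ℕ) : (SD ((X:ℂ[X])^(t+1))).coeff t = 2*I*((t:ℂ)+1) := by
  simp only [SD, coeff_sub, coeff_TT_pow, Nat.add_sub_cancel_left, choose_off t 1,
    Nat.choose_one_right]
  push_cast; ring

lemma S2 (t : ℕ) : (SD ((X:ℂ[X])^(t+2))).coeff t = 0 := by
  simp only [SD, coeff_sub, coeff_TT_pow, Nat.add_sub_cancel_left]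
  ring

lemma S3 (t : ℕ) : (SD ((X:ℂ[X])^(t+3))).coeff t = -(I*((t:ℂ)+3)*((t:ℂ)+2)*((t:ℂ)+1)/3) := by
  simp only [SD, coeff_sub, coeff_TT_pow, Nat.add_sub_cancel_left, choose_off t 3, cc3]
  linear_combination (((t:ℂ)+3)*((t:ℂ)+2)*((t:ℂ)+1)/3) * hI3

lemma TT_coeff_q (q : ℂ[X]) (t : ℕ) (hq : ∀ s, t+2 ≤ s → q.coeff s = 0) (r : ℂ) :
    (TT r q).coeff t = ((t:ℂ)+1) * q.coeff (t+1) * r + q.coeff t := by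
  have h0 : TT r q = taylor r q := by rw [TT, taylor_apply]
  rw [h0, taylor_coeff]
  have hd : (hasseDeriv t q).natDegree ≤ 1 := by
    apply natDegree_le_iff_coeff_eq_zero.mpr
    intro N hN
    rw [hasseDeriv_coeff, hq (N+t) (by omega), mul_zero]
  rw [eq_X_add_C_of_natDegree_le_one hd]
  simp only [eval_add, eval_mul, eval_C, eval_X, hasseDeriv_coeff]
  rw [show (0+t) = t from by omega, Nat.choose_self, show (1+t) = t+1 from by omega,
    choose_off t 1, Nat.choose_one_right]
  push_cast; ring

lemma DD_coeff_q (q : ℂ[X]) (t : ℕ) (hq : ∀ s, t+2 ≤ s → q.coeff s = 0) :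
    (DD q).coeff t = 0 := by
  simp only [DD, coeff_add, coeff_sub, TT_coeff_q q t hq I, TT_coeff_q q t hq (-I)]
  ring

lemma SD_coeff_q (q : ℂ[X]) (t : ℕ) (hq : ∀ s, t+1 ≤ s → q.coeff s = 0) :
    (SD q).coeff t = 0 := by
  have h2 : ∀ s, t+2 ≤ s → q.coeff s = 0 := fun s hs => hq s (by omega)
  simp only [SD, coeff_sub, TT_coeff_q q t h2 I, TT_coeff_q q t h2 (-I),
    hq (t+1) (le_refl _)]
  ring

lemma cXXmul (D : ℂ[X]) (m : ℕ) : ((X:ℂ[X])^2 * D).coeff (m+2) = D.coeff m :=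
  coeff_X_pow_mul D 2 m

lemma cXmul (D : ℂ[X]) (m : ℕ) : ((X:ℂ[X]) * D).coeff (m+1) = D.coeff m :=
  coeff_X_mul D m

lemma cXX0 (D : ℂ[X]) : ((X:ℂ[X])^2 * D).coeff 0 = 0 := by
  rw [coeff_X_pow_mul']; norm_num

lemma cXX1 (D : ℂ[X]) : ((X:ℂ[X])^2 * D).coeff 1 = 0 := by
  rw [coeff_X_pow_mul']; norm_num

lemma cX0 (D : ℂ[X]) : ((X:ℂ[X]) * D).coeff 0 = 0 := by
  rw [mul_coeff_zero]; simp


noncomputable def WD (p : ℂ[X]) : ℂ[X] := C (-(I/2)) * SD p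

lemma hWD (p : ℂ[X]) : C (-(I/2)) * SD p = WD p := rfl

lemma DD_add (p q : ℂ[X]) : DD (p+q) = DD p + DD q := by
  simp only [DD, TT_add]; ring
lemma DD_C_mul (s : ℂ) (p : ℂ[X]) : DD (C s * p) = C s * DD p := by
  simp only [DD, TT_C_mul]; ring
lemma SD_add (p q : ℂ[X]) : SD (p+q) = SD p + SD q := by
  simp only [SD, TT_add]; ring
lemma SD_C_mul (s : ℂ) (p : ℂ[X]) : SD (C s * p) = C s * SD p := by
  simp only [SD, TT_C_mul]; ring
lemma WD_add (p q : ℂ[X]) : WD (p+q) = WD p + WD q := by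
  simp only [WD, SD_add]; ring
lemma WD_C_mul (s : ℂ) (p : ℂ[X]) : WD (C s * p) = C s * WD p := by
  simp only [WD, SD_C_mul]; ring

lemma SW0 (t : ℕ) : (WD ((X:ℂ[X])^t)).coeff t = 0 := by
  rw [WD, coeff_C_mul, S0, mul_zero]

lemma SW1 (t : ℕ) : (WD ((X:ℂ[X])^(t+1))).coeff t = (t:ℂ)+1 := by
  rw [WD, coeff_C_mul, S1]
  linear_combination (-((t:ℂ)+1)) * hI2

lemma SW2 (t : ℕ) : (WD ((X:ℂ[X])^(t+2))).coeff t = 0 := by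
  rw [WD, coeff_C_mul, S2, mul_zero]

lemma SW3 (t : ℕ) : (WD ((X:ℂ[X])^(t+3))).coeff t
    = -(((t:ℂ)+3)*((t:ℂ)+2)*((t:ℂ)+1)/6) := by
  rw [WD, coeff_C_mul, S3]
  linear_combination (((t:ℂ)+3)*((t:ℂ)+2)*((t:ℂ)+1)/6) * hI2

lemma SW_q (q : ℂ[X]) (t : ℕ) (hq : ∀ s, t+1 ≤ s → q.coeff s = 0) :
    (WD q).coeff t = 0 := by
  rw [WD, coeff_C_mul, SD_coeff_q q t hq, mul_zero]

lemma key1 (a b c d e : ℂ) (P : ℕ → ℂ[X]) (hdeg : ∀ m, (P m).natDegree = m)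
    (hQ : ∀ m, Qp a b c d e m (P m) = 0) (M : ℕ) :
    (2*a*(M:ℂ) + d) * (P (M+1)).coeff M
      = ((M:ℂ)+1) * (b*(M:ℂ) + e) * (P (M+1)).coeff (M+1) := by
  obtain ⟨al, hal⟩ : ∃ x : ℂ, (P (M+1)).coeff (M+1) = x := ⟨_, rfl⟩
  obtain ⟨be, hbe⟩ : ∃ x : ℂ, (P (M+1)).coeff M = x := ⟨_, rfl⟩
  rw [hal, hbe]
  obtain ⟨q, hqdef⟩ : ∃ q : ℂ[X], P (M+1) - C al * X^(M+1) - C be * X^M = q := ⟨_, rfl⟩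
  have hq : ∀ s, M ≤ s → q.coeff s = 0 := by
    intro s hs
    rw [← hqdef]
    rcases lt_or_ge s (M+2) with h | h
    · rcases (show s = M ∨ s = M+1 by omega) with h2 | h2
      · rw [h2]
        simp [coeff_sub, coeff_C_mul, coeff_X_pow,
          if_neg (show ¬(M = M+1) by omega), hbe]
      · rw [h2]
        simp [coeff_sub, coeff_C_mul, coeff_X_pow,
          if_neg (show ¬(M+1 = M) by omega), hal]
    · have h1 : (P (M+1)).coeff s = 0 :=
        coeff_eq_zero_of_natDegree_lt (by rw [hdeg]; omega)
      simp [coeff_sub, coeff_C_mul, coeff_X_pow, h1,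
        if_neg (show ¬(s = M+1) by omega), if_neg (show ¬(s = M) by omega)]
  have hp : P (M+1) = C al * X^(M+1) + C be * X^M + q := by rw [← hqdef]; ring
  have H := hQ (M+1)
  unfold Qp at H
  rw [hp] at H
  simp only [hWD, DD_add, DD_C_mul, WD_add, WD_C_mul] at H
  have Hexp :
      C a * (C al * ((X:ℂ[X])^2 * DD (X^(M+1)))) + C a * (C be * (X^2 * DD (X^M)))
        + C a * (X^2 * DD q)
      + C b * (C al * (X * DD (X^(M+1)))) + C b * (C be * (X * DD (X^M)))
        + C b * (X * DD q)
      + C c * (C al * DD (X^(M+1))) + C c * (C be * DD (X^M)) + C c * DD q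
      - C d * (C al * (X * WD (X^(M+1))))
      - C d * (C be * (X * WD (X^M)))
      - C d * (X * WD q)
      - C e * (C al * WD (X^(M+1)))
      - C e * (C be * WD (X^M))
      - C e * WD q
      + C (((M+1 : ℕ) : ℂ) * ((((M+1 : ℕ) : ℂ) - 1) * a + d)) * (C al * X^(M+1))
      + C (((M+1 : ℕ) : ℂ) * ((((M+1 : ℕ) : ℂ) - 1) * a + d)) * (C be * X^M)
      + C (((M+1 : ℕ) : ℂ) * ((((M+1 : ℕ) : ℂ) - 1) * a + d)) * q = 0 := by
    linear_combination -H
  have HM := congrArg (fun w : ℂ[X] => w.coeff M) Hexp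
  simp only [coeff_add, coeff_sub, coeff_C_mul, coeff_zero] at HM
  rcases lt_or_ge M 2 with hM | hM
  · interval_cases M
    · -- M = 0
      rw [cXX0, cXX0, cXX0, cX0, cX0, cX0, D1 0, D0 0,
        DD_coeff_q q 0 (fun s hs => hq s (by omega)),
        cX0, cX0, cX0, SW1 0, SW0 0, SW_q q 0 (fun s hs => hq s (by omega)),
        show ((X:ℂ[X])^(0+1)).coeff 0 = 0 from by rw [coeff_X_pow]; norm_num,
        show ((X:ℂ[X])^0).coeff 0 = 1 from by rw [coeff_X_pow]; norm_num,
        hq 0 (le_refl _)] at HM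
      push_cast at HM ⊢
      linear_combination HM
    · -- M = 1
      rw [cXX1, cXX1, cXX1,
        show ((X:ℂ[X]) * DD (X^(1+1))).coeff 1 = -(((0:ℂ)+2)*((0:ℂ)+1)) from by
          have h : ((X:ℂ[X]) * DD (X^(0+1+1))).coeff (0+1) = -(((0:ℂ)+2)*((0:ℂ)+1)) := by
            rw [coeff_X_mul, show (0:ℕ)+1+1 = 0+2 from rfl, D2]; push_cast; ring
          exact h,
        show ((X:ℂ[X]) * DD (X^1)).coeff 1 = 0 from by
          rw [show (1:ℕ) = 0+1 from rfl, coeff_X_mul, D1],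
        show ((X:ℂ[X]) * DD q).coeff 1 = 0 from by
          rw [show (1:ℕ) = 0+1 from rfl, coeff_X_mul,
            DD_coeff_q q 0 (fun s hs => hq s (by omega))],
        show (DD ((X:ℂ[X])^(1+1))).coeff 1 = 0 from D1 1,
        show (DD ((X:ℂ[X])^1)).coeff 1 = 0 from D0 1,
        DD_coeff_q q 1 (fun s hs => hq s (by omega)),
        show ((X:ℂ[X]) * WD (X^(1+1))).coeff 1 = 0 from by
          have h : ((X:ℂ[X]) * WD (X^(0+1+1))).coeff (0+1) = 0 := by
            rw [coeff_X_mul, show (0:ℕ)+1+1 = 0+2 from rfl, SW2]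
          exact h,
        show ((X:ℂ[X]) * WD (X^1)).coeff 1 = (0:ℂ)+1 from by
          rw [show (1:ℕ) = 0+1 from rfl, coeff_X_mul, SW1]
          push_cast; ring,
        show ((X:ℂ[X]) * WD q).coeff 1 = 0 from by
          rw [show (1:ℕ) = 0+1 from rfl, coeff_X_mul,
            SW_q q 0 (fun s hs => hq s (by omega))],
        SW1 1, SW0 1, SW_q q 1 (fun s hs => hq s (by omega)),
        show ((X:ℂ[X])^(1+1)).coeff 1 = 0 from by rw [coeff_X_pow]; norm_num,
        show ((X:ℂ[X])^1).coeff 1 = 1 from by rw [coeff_X_pow]; norm_num,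
        hq 1 (le_refl _)] at HM
      push_cast at HM ⊢
      linear_combination HM
  · obtain ⟨m, rfl⟩ : ∃ m, M = m + 2 := ⟨M - 2, by omega⟩
    rw [show ((X:ℂ[X])^2 * DD (X^(m+2+1))).coeff (m+2) = 0 from by
          rw [cXXmul, show m+2+1 = m+3 from rfl, D3],
        show ((X:ℂ[X])^2 * DD (X^(m+2))).coeff (m+2) = -(((m:ℂ)+2)*((m:ℂ)+1)) from by
          rw [cXXmul, D2],
        show ((X:ℂ[X])^2 * DD q).coeff (m+2) = 0 from by
          rw [cXXmul, DD_coeff_q q m (fun s hs => hq s (by omega))],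
        show ((X:ℂ[X]) * DD (X^(m+2+1))).coeff (m+2) = -((((m+1:ℕ):ℂ)+2)*(((m+1:ℕ):ℂ)+1)) from by
          rw [show m+2 = m+1+1 from rfl, coeff_X_mul, show m+1+1+1 = (m+1)+2 from rfl, D2],
        show ((X:ℂ[X]) * DD (X^(m+2))).coeff (m+2) = 0 from by
          rw [show m+2 = m+1+1 from rfl, coeff_X_mul]; exact D1 (m+1),
        show ((X:ℂ[X]) * DD q).coeff (m+2) = 0 from by
          rw [show m+2 = m+1+1 from rfl, coeff_X_mul,
            DD_coeff_q q (m+1) (fun s hs => hq s (by omega))],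
        show (DD ((X:ℂ[X])^(m+2+1))).coeff (m+2) = 0 from D1 (m+2),
        show (DD ((X:ℂ[X])^(m+2))).coeff (m+2) = 0 from D0 (m+2),
        DD_coeff_q q (m+2) (fun s hs => hq s (by omega)),
        show ((X:ℂ[X]) * WD (X^(m+2+1))).coeff (m+2) = 0 from by
          rw [show m+2 = m+1+1 from rfl, coeff_X_mul, show m+1+1+1 = (m+1)+2 from rfl, SW2],
        show ((X:ℂ[X]) * WD (X^(m+2))).coeff (m+2) = ((m+1:ℕ):ℂ)+1 from by
          rw [show m+2 = m+1+1 from rfl, coeff_X_mul]; exact SW1 (m+1),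
        show ((X:ℂ[X]) * WD q).coeff (m+2) = 0 from by
          rw [show m+2 = m+1+1 from rfl, coeff_X_mul,
            SW_q q (m+1) (fun s hs => hq s (by omega))],
        SW1 (m+2), SW0 (m+2), SW_q q (m+2) (fun s hs => hq s (by omega)),
        show ((X:ℂ[X])^(m+2+1)).coeff (m+2) = 0 from by
          rw [coeff_X_pow, if_neg (show ¬(m+2 = m+2+1) by omega)],
        show ((X:ℂ[X])^(m+2)).coeff (m+2) = 1 from by rw [coeff_X_pow, if_pos rfl],
        hq (m+2) (le_refl _)] at HM
    push_cast at HM ⊢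
    linear_combination HM


lemma key2 (a b c d e : ℂ) (P : ℕ → ℂ[X]) (hdeg : ∀ m, (P m).natDegree = m)
    (hQ : ∀ m, Qp a b c d e m (P m) = 0) (M : ℕ) :
    2*(a*(2*(M:ℂ)+1) + d) * (P (M+2)).coeff M
      = ( c*((M:ℂ)+2)*((M:ℂ)+1) - a*((M:ℂ)+2)*((M:ℂ)+1)*(M:ℂ)*((M:ℂ)-1)/12
          - d*((M:ℂ)+2)*((M:ℂ)+1)*(M:ℂ)/6 ) * (P (M+2)).coeff (M+2)
      + ((M:ℂ)+1)*(b*(M:ℂ)+e) * (P (M+2)).coeff (M+1) := by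
  obtain ⟨al, hal⟩ : ∃ x : ℂ, (P (M+2)).coeff (M+2) = x := ⟨_, rfl⟩
  obtain ⟨be, hbe⟩ : ∃ x : ℂ, (P (M+2)).coeff (M+1) = x := ⟨_, rfl⟩
  obtain ⟨ga, hga⟩ : ∃ x : ℂ, (P (M+2)).coeff M = x := ⟨_, rfl⟩
  rw [hal, hbe, hga]
  obtain ⟨q, hqdef⟩ : ∃ q : ℂ[X],
      P (M+2) - C al * X^(M+2) - C be * X^(M+1) - C ga * X^M = q := ⟨_, rfl⟩
  have hq : ∀ s, M ≤ s → q.coeff s = 0 := by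
    intro s hs
    rw [← hqdef]
    rcases lt_or_ge s (M+3) with h | h
    · rcases (show s = M ∨ s = M+1 ∨ s = M+2 by omega) with h2 | h2 | h2
      · rw [h2]
        simp [coeff_sub, coeff_C_mul, coeff_X_pow,
          if_neg (show ¬(M = M+1) by omega), if_neg (show ¬(M = M+2) by omega), hga]
      · rw [h2]
        simp [coeff_sub, coeff_C_mul, coeff_X_pow,
          if_neg (show ¬(M+1 = M) by omega), if_neg (show ¬(M+1 = M+2) by omega), hbe]
      · rw [h2]
        simp [coeff_sub, coeff_C_mul, coeff_X_pow,
          if_neg (show ¬(M+2 = M) by omega), if_neg (show ¬(M+2 = M+1) by omega), hal]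
    · have h1 : (P (M+2)).coeff s = 0 :=
        coeff_eq_zero_of_natDegree_lt (by rw [hdeg]; omega)
      simp [coeff_sub, coeff_C_mul, coeff_X_pow, h1,
        if_neg (show ¬(s = M+2) by omega), if_neg (show ¬(s = M+1) by omega),
        if_neg (show ¬(s = M) by omega)]
  have hp : P (M+2) = C al * X^(M+2) + C be * X^(M+1) + C ga * X^M + q := by
    rw [← hqdef]; ring
  have H := hQ (M+2)
  unfold Qp at H
  rw [hp] at H
  simp only [hWD, DD_add, DD_C_mul, WD_add, WD_C_mul] at H
  have Hexp :
      C a * (C al * ((X:ℂ[X])^2 * DD (X^(M+2)))) + C a * (C be * (X^2 * DD (X^(M+1))))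
        + C a * (C ga * (X^2 * DD (X^M))) + C a * (X^2 * DD q)
      + C b * (C al * (X * DD (X^(M+2)))) + C b * (C be * (X * DD (X^(M+1))))
        + C b * (C ga * (X * DD (X^M))) + C b * (X * DD q)
      + C c * (C al * DD (X^(M+2))) + C c * (C be * DD (X^(M+1)))
        + C c * (C ga * DD (X^M)) + C c * DD q
      - C d * (C al * (X * WD (X^(M+2))))
      - C d * (C be * (X * WD (X^(M+1))))
      - C d * (C ga * (X * WD (X^M)))
      - C d * (X * WD q)
      - C e * (C al * WD (X^(M+2)))
      - C e * (C be * WD (X^(M+1)))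
      - C e * (C ga * WD (X^M))
      - C e * WD q
      + C (((M+2 : ℕ) : ℂ) * ((((M+2 : ℕ) : ℂ) - 1) * a + d)) * (C al * X^(M+2))
      + C (((M+2 : ℕ) : ℂ) * ((((M+2 : ℕ) : ℂ) - 1) * a + d)) * (C be * X^(M+1))
      + C (((M+2 : ℕ) : ℂ) * ((((M+2 : ℕ) : ℂ) - 1) * a + d)) * (C ga * X^M)
      + C (((M+2 : ℕ) : ℂ) * ((((M+2 : ℕ) : ℂ) - 1) * a + d)) * q = 0 := by
    linear_combination -H
  have HM := congrArg (fun w : ℂ[X] => w.coeff M) Hexp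
  simp only [coeff_add, coeff_sub, coeff_C_mul, coeff_zero] at HM
  rcases lt_or_ge M 2 with hM | hM
  · interval_cases M
    · -- M = 0
      rw [cXX0, cXX0, cXX0, cXX0, cX0, cX0, cX0, cX0,
        D2 0, D1 0, D0 0, DD_coeff_q q 0 (fun s hs => hq s (by omega)),
        cX0, cX0, cX0, cX0,
        SW2 0, SW1 0, SW0 0, SW_q q 0 (fun s hs => hq s (by omega)),
        show ((X:ℂ[X])^(0+2)).coeff 0 = 0 from by rw [coeff_X_pow]; norm_num,
        show ((X:ℂ[X])^(0+1)).coeff 0 = 0 from by rw [coeff_X_pow]; norm_num,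
        show ((X:ℂ[X])^0).coeff 0 = 1 from by rw [coeff_X_pow]; norm_num,
        hq 0 (le_refl _)] at HM
      push_cast at HM ⊢
      linear_combination HM
    · -- M = 1
      rw [cXX1, cXX1, cXX1, cXX1,
        show ((X:ℂ[X]) * DD (X^(1+2))).coeff 1 = 0 from by
          have h : ((X:ℂ[X]) * DD (X^(0+1+2))).coeff (0+1) = 0 := by
            rw [coeff_X_mul, show (0:ℕ)+1+2 = 0+3 from rfl, D3]
          exact h,
        show ((X:ℂ[X]) * DD (X^(1+1))).coeff 1 = -(((0:ℂ)+2)*((0:ℂ)+1)) from by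
          have h : ((X:ℂ[X]) * DD (X^(0+1+1))).coeff (0+1) = -(((0:ℂ)+2)*((0:ℂ)+1)) := by
            rw [coeff_X_mul, show (0:ℕ)+1+1 = 0+2 from rfl, D2]; push_cast; ring
          exact h,
        show ((X:ℂ[X]) * DD (X^1)).coeff 1 = 0 from by
          have h : ((X:ℂ[X]) * DD (X^(0+1))).coeff (0+1) = 0 := by
            rw [coeff_X_mul, D1]
          exact h,
        show ((X:ℂ[X]) * DD q).coeff 1 = 0 from by
          have h : ((X:ℂ[X]) * DD q).coeff (0+1) = 0 := by
            rw [coeff_X_mul, DD_coeff_q q 0 (fun s hs => hq s (by omega))]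
          exact h,
        D2 1, D1 1, D0 1, DD_coeff_q q 1 (fun s hs => hq s (by omega)),
        show ((X:ℂ[X]) * WD (X^(1+2))).coeff 1 = -(((0:ℂ)+3)*((0:ℂ)+2)*((0:ℂ)+1)/6) from by
          have h : ((X:ℂ[X]) * WD (X^(0+1+2))).coeff (0+1)
              = -(((0:ℂ)+3)*((0:ℂ)+2)*((0:ℂ)+1)/6) := by
            rw [coeff_X_mul, show (0:ℕ)+1+2 = 0+3 from rfl, SW3]; push_cast; ring
          exact h,
        show ((X:ℂ[X]) * WD (X^(1+1))).coeff 1 = 0 from by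
          have h : ((X:ℂ[X]) * WD (X^(0+1+1))).coeff (0+1) = 0 := by
            rw [coeff_X_mul, show (0:ℕ)+1+1 = 0+2 from rfl, SW2]
          exact h,
        show ((X:ℂ[X]) * WD (X^1)).coeff 1 = (0:ℂ)+1 from by
          have h : ((X:ℂ[X]) * WD (X^(0+1))).coeff (0+1) = (0:ℂ)+1 := by
            rw [coeff_X_mul, SW1]; push_cast; ring
          exact h,
        show ((X:ℂ[X]) * WD q).coeff 1 = 0 from by
          have h : ((X:ℂ[X]) * WD q).coeff (0+1) = 0 := by
            rw [coeff_X_mul, SW_q q 0 (fun s hs => hq s (by omega))]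
          exact h,
        SW2 1, SW1 1, SW0 1, SW_q q 1 (fun s hs => hq s (by omega)),
        show ((X:ℂ[X])^(1+2)).coeff 1 = 0 from by rw [coeff_X_pow]; norm_num,
        show ((X:ℂ[X])^(1+1)).coeff 1 = 0 from by rw [coeff_X_pow]; norm_num,
        show ((X:ℂ[X])^1).coeff 1 = 1 from by rw [coeff_X_pow]; norm_num,
        hq 1 (le_refl _)] at HM
      push_cast at HM ⊢
      linear_combination HM
  · obtain ⟨m, rfl⟩ : ∃ m, M = m + 2 := ⟨M - 2, by omega⟩
    rw [show ((X:ℂ[X])^2 * DD (X^(m+2+2))).coeff (m+2)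
          = ((m:ℂ)+4)*((m:ℂ)+3)*((m:ℂ)+2)*((m:ℂ)+1)/12 from by
          rw [cXXmul, show m+2+2 = m+4 from rfl]; exact D4 m,
        show ((X:ℂ[X])^2 * DD (X^(m+2+1))).coeff (m+2) = 0 from by
          rw [cXXmul, show m+2+1 = m+3 from rfl, D3],
        show ((X:ℂ[X])^2 * DD (X^(m+2))).coeff (m+2) = -(((m:ℂ)+2)*((m:ℂ)+1)) from by
          rw [cXXmul, D2],
        show ((X:ℂ[X])^2 * DD q).coeff (m+2) = 0 from by
          rw [cXXmul, DD_coeff_q q m (fun s hs => hq s (by omega))],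
        show ((X:ℂ[X]) * DD (X^(m+2+2))).coeff (m+2) = 0 from by
          rw [show m+2 = m+1+1 from rfl, coeff_X_mul, show m+1+1+2 = (m+1)+3 from rfl, D3],
        show ((X:ℂ[X]) * DD (X^(m+2+1))).coeff (m+2)
            = -((((m+1:ℕ):ℂ)+2)*(((m+1:ℕ):ℂ)+1)) from by
          rw [show m+2 = m+1+1 from rfl, coeff_X_mul, show m+1+1+1 = (m+1)+2 from rfl, D2],
        show ((X:ℂ[X]) * DD (X^(m+2))).coeff (m+2) = 0 from by
          rw [show m+2 = m+1+1 from rfl, coeff_X_mul]; exact D1 (m+1),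
        show ((X:ℂ[X]) * DD q).coeff (m+2) = 0 from by
          rw [show m+2 = m+1+1 from rfl, coeff_X_mul,
            DD_coeff_q q (m+1) (fun s hs => hq s (by omega))],
        show (DD ((X:ℂ[X])^(m+2+2))).coeff (m+2)
            = -((((m+2:ℕ):ℂ)+2)*(((m+2:ℕ):ℂ)+1)) from by
          rw [show m+2+2 = (m+2)+2 from rfl, D2],
        show (DD ((X:ℂ[X])^(m+2+1))).coeff (m+2) = 0 from D1 (m+2),
        show (DD ((X:ℂ[X])^(m+2))).coeff (m+2) = 0 from D0 (m+2),
        DD_coeff_q q (m+2) (fun s hs => hq s (by omega)),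
        show ((X:ℂ[X]) * WD (X^(m+2+2))).coeff (m+2)
            = -((((m+1:ℕ):ℂ)+3)*(((m+1:ℕ):ℂ)+2)*(((m+1:ℕ):ℂ)+1)/6) from by
          rw [show m+2 = m+1+1 from rfl, coeff_X_mul, show m+1+1+2 = (m+1)+3 from rfl, SW3],
        show ((X:ℂ[X]) * WD (X^(m+2+1))).coeff (m+2) = 0 from by
          rw [show m+2 = m+1+1 from rfl, coeff_X_mul, show m+1+1+1 = (m+1)+2 from rfl, SW2],
        show ((X:ℂ[X]) * WD (X^(m+2))).coeff (m+2) = ((m+1:ℕ):ℂ)+1 from by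
          rw [show m+2 = m+1+1 from rfl, coeff_X_mul]; exact SW1 (m+1),
        show ((X:ℂ[X]) * WD q).coeff (m+2) = 0 from by
          rw [show m+2 = m+1+1 from rfl, coeff_X_mul,
            SW_q q (m+1) (fun s hs => hq s (by omega))],
        show (WD ((X:ℂ[X])^(m+2+2))).coeff (m+2) = 0 from by
          rw [show m+2+2 = (m+2)+2 from rfl, SW2],
        show (WD ((X:ℂ[X])^(m+2+1))).coeff (m+2) = ((m+2:ℕ):ℂ)+1 from SW1 (m+2),
        show (WD ((X:ℂ[X])^(m+2))).coeff (m+2) = 0 from SW0 (m+2),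
        SW_q q (m+2) (fun s hs => hq s (by omega)),
        show ((X:ℂ[X])^(m+2+2)).coeff (m+2) = 0 from by
          rw [coeff_X_pow, if_neg (show ¬(m+2 = m+2+2) by omega)],
        show ((X:ℂ[X])^(m+2+1)).coeff (m+2) = 0 from by
          rw [coeff_X_pow, if_neg (show ¬(m+2 = m+2+1) by omega)],
        show ((X:ℂ[X])^(m+2)).coeff (m+2) = 1 from by rw [coeff_X_pow, if_pos rfl],
        hq (m+2) (le_refl _)] at HM
    push_cast at HM ⊢
    linear_combination HM

end AuxRec

set_option maxHeartbeats 2000000 in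
open Polynomial in
theorem stmt_1 (a b c d e α : ℂ) (k : ℕ → ℂ) (P : ℕ → Polynomial ℂ)
    (hk : ∀ m, k m ≠ 0)
    (hdeg : ∀ m, (P m).natDegree = m)
    (hlead : ∀ m, (P m).leadingCoeff = I^m * k m)
    (hde : ∀ (m : ℕ) (x : ℂ),
      (a * x^2 + b * x + c) * Dd (Dd (fun t => (P m).eval t)) x
        + (d * x + e) * Sd (Dd (fun t => (P m).eval t)) x
        - (m : ℂ) * (((m : ℂ) - 1) * a + d) * (P m).eval x = 0)
    (n : ℕ) (hn : 1 ≤ n)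
    (hden : (2*a*(n:ℂ)-2*a+d) * (2*a*(n:ℂ)+d) * (2*a*(n:ℂ)-a+d) * (2*a*(n:ℂ)-3*a+d) ≠ 0)
    (A B C : ℂ)
    (hrec : ∀ x : ℂ, (P (n+1)).eval x = (A*x+B) * (P n).eval x - C * (P (n-1)).eval x) :
    A = I * (k (n+1) / k n) ∧
    B = I * (k (n+1) / k n) *
      ((2*b*(n:ℂ)^2 - 2*b*(n:ℂ) - 2*e)*a + d*(2*b*(n:ℂ) + e)) /
      ((2*a*(n:ℂ) - 2*a + d) * (2*a*(n:ℂ) + d)) ∧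
    C = (k (n+1) / k (n-1)) * (n:ℂ) *
      ( -8*(n:ℂ)*((n:ℂ)-2)*((n:ℂ)-1)^4*a^5
        + (-4*(7*(n:ℂ)^2-13*(n:ℂ)+2)*((n:ℂ)-1)^3*d
            + 32*c*(n:ℂ)*((n:ℂ)-2)*((n:ℂ)-1)^2) * a^4
        + (-8*(n:ℂ)*((n:ℂ)-2)*((n:ℂ)-1)^2*b^2
            - 2*(19*(n:ℂ)^2-34*(n:ℂ)+10)*((n:ℂ)-1)^2*d^2
            + 16*c*((n:ℂ)-1)*(5*(n:ℂ)^2-9*(n:ℂ)+2)*d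
            + 8*e^2*(n:ℂ)*((n:ℂ)-2)) * a^3
        + (-4*((n:ℂ)-1)*(5*(n:ℂ)^2-9*(n:ℂ)+2)*d*b^2
            - 8*e*(n:ℂ)*((n:ℂ)-2)*d*b
            + (72*(n:ℂ)^2-128*(n:ℂ)+48)*d^2*c
            - ((n:ℂ)-1)*(5*(n:ℂ)-3)*(5*(n:ℂ)-6)*d^3
            + (12*(n:ℂ)-8)*e^2*d) * a^2
        + (-4*(4*(n:ℂ)-3)*((n:ℂ)-1)*d^2*b^2
            + (-12*(n:ℂ)+8)*e*d^2*b
            + (28*(n:ℂ)-24)*d^3*c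
            - (8*(n:ℂ)-7)*((n:ℂ)-1)*d^4
            + 4*e^2*d^2) * a
        + (-4*(n:ℂ)+4)*d^3*b^2 - 4*b*d^3*e + (1-(n:ℂ))*d^5 + 4*c*d^4 ) /
      (4*(2*a*(n:ℂ)-2*a+d)^2 * (2*a*(n:ℂ)-3*a+d) * (2*a*(n:ℂ)+d) * (2*a*(n:ℂ)-a+d)) := by
  have hQ := AuxRec.Qzero a b c d e P hde
  have hc : ∀ m, (P m).coeff m = I^m * k m := by
    intro m
    have h := hlead m
    rwa [Polynomial.leadingCoeff, hdeg m] at h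
  obtain ⟨N, rfl⟩ : ∃ N, n = N + 1 := ⟨n - 1, by omega⟩
  simp only [show N+1+1 = N+2 from rfl, show N+1-1 = N from rfl] at hrec ⊢
  push_cast at hden ⊢
  have hf1 : 2*a*((N:ℂ)+1)-2*a+d ≠ 0 := by
    intro h; apply hden; rw [h]; ring
  have hf2 : 2*a*((N:ℂ)+1)+d ≠ 0 := by
    intro h; apply hden; rw [h]; ring
  have hf3 : 2*a*((N:ℂ)+1)-a+d ≠ 0 := by
    intro h; apply hden; rw [h]; ring
  have hf4 : 2*a*((N:ℂ)+1)-3*a+d ≠ 0 := by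
    intro h; apply hden; rw [h]; ring
  obtain ⟨u, hu⟩ : ∃ x : ℂ, (I:ℂ)^N = x := ⟨_, rfl⟩
  have hu0 : u ≠ 0 := by rw [← hu]; exact pow_ne_zero _ Complex.I_ne_zero
  have w0 : (P N).coeff N = u * k N := by rw [hc N, hu]
  have w1 : (P (N+1)).coeff (N+1) = u * I * k (N+1) := by rw [hc (N+1), pow_succ, hu]
  have w2 : (P (N+2)).coeff (N+2) = -u * k (N+2) := by
    rw [hc (N+2), show N+2 = N+1+1 from rfl, pow_succ, pow_succ, hu]
    linear_combination (u * k (N+2)) * AuxRec.hI2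
  have R : P (N+2) = Polynomial.C A * (Polynomial.X * P (N+1)) + Polynomial.C B * P (N+1)
      - Polynomial.C C * P N := by
    apply Polynomial.funext
    intro x
    have h := hrec x
    simp only [Polynomial.eval_add, Polynomial.eval_sub, Polynomial.eval_mul,
      Polynomial.eval_C, Polynomial.eval_X]
    linear_combination h
  have E1 := congrArg (fun w : Polynomial ℂ => w.coeff (N+2)) R
  have E2 := congrArg (fun w : Polynomial ℂ => w.coeff (N+1)) R
  have E3 := congrArg (fun w : Polynomial ℂ => w.coeff N) R
  simp only [Polynomial.coeff_add, Polynomial.coeff_sub, Polynomial.coeff_C_mul] at E1 E2 E3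
  have z1 : (P (N+1)).coeff (N+2) = 0 :=
    Polynomial.coeff_eq_zero_of_natDegree_lt (by rw [hdeg]; omega)
  have z2 : (P N).coeff (N+2) = 0 :=
    Polynomial.coeff_eq_zero_of_natDegree_lt (by rw [hdeg]; omega)
  have z3 : (P N).coeff (N+1) = 0 :=
    Polynomial.coeff_eq_zero_of_natDegree_lt (by rw [hdeg]; omega)
  rw [show ((Polynomial.X : Polynomial ℂ) * P (N+1)).coeff (N+2) = (P (N+1)).coeff (N+1) from by
        rw [show N+2 = N+1+1 from rfl, Polynomial.coeff_X_mul],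
      z1, z2, w2, w1] at E1
  rw [show ((Polynomial.X : Polynomial ℂ) * P (N+1)).coeff (N+1) = (P (N+1)).coeff N from
        Polynomial.coeff_X_mul _ N, z3, w1] at E2
  rw [w0] at E3
  have K1b := AuxRec.key1 a b c d e P hdeg hQ N
  rw [w1] at K1b
  have K1a := AuxRec.key1 a b c d e P hdeg hQ (N+1)
  simp only [show N+1+1 = N+2 from rfl] at K1a
  push_cast at K1a
  rw [w2] at K1a
  have K2a := AuxRec.key2 a b c d e P hdeg hQ N
  rw [w2] at K2a
  have hA2 : A * k (N+1) = I * k (N+2) := by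
    apply mul_left_cancel₀ hu0
    show u * (A * k (N+1)) = u * (I * k (N+2))
    linear_combination I * E1 + (u*A*k (N+1)) * AuxRec.hI2
  have hB1 : (u * I * k (N+1)) * (B * (k (N+1) * ((2*a*(N:ℂ)+d) * (2*a*(N:ℂ)+2*a+d))))
      = (u * I * k (N+1)) * (I * k (N+2) * ((2*b*((N:ℂ)+1)^2 - 2*b*((N:ℂ)+1) - 2*e)*a + d*(2*b*((N:ℂ)+1)+e))) := by
    linear_combination (-(k (N+1)*(2*a*(N:ℂ)+d)*(2*a*(N:ℂ)+2*a+d))) * E2 + (k (N+1)*(2*a*(N:ℂ)+d)) * K1a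
      + (-(A*k (N+1)*(2*a*(N:ℂ)+2*a+d))) * K1b + (-((2*a*(N:ℂ)+2*a+d)*(((N:ℂ)+1)*(b*(N:ℂ)+e))*u*I*k (N+1))) * hA2
      + (-(u*k (N+1)*k (N+2)*((((N:ℂ)+1)*(b*(N:ℂ)+e))*(2*a*(N:ℂ)+2*a+d)+((2*b*((N:ℂ)+1)^2 - 2*b*((N:ℂ)+1) - 2*e)*a + d*(2*b*((N:ℂ)+1)+e))))) * AuxRec.hI2
  have hB3 : B * (k (N+1) * ((2*a*(N:ℂ)+d) * (2*a*(N:ℂ)+2*a+d))) = I * k (N+2) * ((2*b*((N:ℂ)+1)^2 - 2*b*((N:ℂ)+1) - 2*e)*a + d*(2*b*((N:ℂ)+1)+e)) :=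
    mul_left_cancel₀ (mul_ne_zero (mul_ne_zero hu0 Complex.I_ne_zero) (hk (N+1))) hB1
  refine ⟨?_, ?_, ?_⟩
  · field_simp [hk (N+1)]
    linear_combination hA2
  · rw [eq_div_iff (mul_ne_zero hf1 hf2)]
    field_simp [hk (N+1), hf1, hf2]
    linear_combination hB3
  · rcases N with _ | K
    · -- n = 1
      rw [show ((Polynomial.X : Polynomial ℂ) * P (0+1)).coeff 0 = 0 from AuxRec.cX0 _] at E3
      push_cast at E3 K1b K1a K2a hB3 hf1 hf2 hf3 hf4 ⊢
      have hC1 : (u * k 1) * (C * (k 0 * (4*(a+d)*(-a+d)*d^2*(2*a+d))))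
          = (u * k 1) * (-(k 2 * (4*(a+d)*(-a+d)*e*((- 2*e)*a + d*(2*b+e)) - 2*(-a+d)*d^2*((2*c)*(2*a+d) + e*(2*(b+e)))))) := by
        linear_combination (4*(a+d)*(-a+d)*d^2*(2*a+d)*k 1) * E3
          + (-(2*(-a+d)*d^2*(k 1)*(2*a+d))) * K2a
          + (-(2*(-a+d)*d^2*(k 1)*e)) * K1a
          + (4*(a+d)*(-a+d)*B*d*(2*a+d)*(k 1)) * K1b
          + (4*(a+d)*(-a+d)*e*u*I*(k 1)) * hB3
          + (4*(a+d)*(-a+d)*u*(k 1)*(k 2)*e*((- 2*e)*a + d*(2*b+e))) * AuxRec.hI2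
      have hC2 := mul_left_cancel₀ (mul_ne_zero hu0 (hk 1)) hC1
      have hDEN : 4 * (2*a*((0:ℂ)+1) - 2*a+d)^2 * (2*a*((0:ℂ)+1) - 3*a+d)
          * (2*a*((0:ℂ)+1)+d) * (2*a*((0:ℂ)+1)-a+d) ≠ 0 :=
        mul_ne_zero (mul_ne_zero (mul_ne_zero
          (mul_ne_zero (by norm_num) (pow_ne_zero 2 hf1)) hf4) hf2) hf3
      rw [eq_div_iff hDEN, div_mul_eq_mul_div, div_mul_eq_mul_div, eq_div_iff (hk 0)]
      linear_combination hC2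
    · -- n = K+2
      rw [show ((Polynomial.X : Polynomial ℂ) * P (K+1+1)).coeff (K+1) = (P (K+1+1)).coeff K from
            Polynomial.coeff_X_mul _ K] at E3
      have K2b := AuxRec.key2 a b c d e P hdeg hQ K
      simp only [show K+2 = K+1+1 from rfl] at K2b
      rw [w1] at K2b
      push_cast at E3 K1b K1a K2a K2b hA2 hB3 hf1 hf2 hf3 hf4 ⊢
      have hC1 : (u * k (K+1+1)) * (C * (k (K+1) * (4*(2*a*(K:ℂ)+3*a+d)*(2*a*(K:ℂ)+a+d)*(2*a*(K:ℂ)+2*a+d)^2*(2*a*(K:ℂ)+4*a+d))))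
          = (u * k (K+1+1)) * (-(k (K+1+2) * (2*(2*a*(K:ℂ)+3*a+d)*(2*a*(K:ℂ)+2*a+d)*(2*a*(K:ℂ)+4*a+d)*((c*((K:ℂ)+2)*((K:ℂ)+1) - a*((K:ℂ)+2)*((K:ℂ)+1)*(K:ℂ)*((K:ℂ)-1)/12 - d*((K:ℂ)+2)*((K:ℂ)+1)*(K:ℂ)/6)*(2*a*(K:ℂ)+2*a+d) + (((K:ℂ)+1)*(b*(K:ℂ)+e))*(((K:ℂ)+2)*(b*((K:ℂ)+1)+e))) + 4*(2*a*(K:ℂ)+3*a+d)*(2*a*(K:ℂ)+a+d)*(((K:ℂ)+2)*(b*((K:ℂ)+1)+e))*((2*b*((K:ℂ)+2)^2 - 2*b*((K:ℂ)+2) - 2*e)*a + d*(2*b*((K:ℂ)+2)+e)) - 2*(2*a*(K:ℂ)+a+d)*(2*a*(K:ℂ)+2*a+d)^2*((c*((K:ℂ)+3)*((K:ℂ)+2) - a*((K:ℂ)+3)*((K:ℂ)+2)*((K:ℂ)+1)*(K:ℂ)/12 - d*((K:ℂ)+3)*((K:ℂ)+2)*((K:ℂ)+1)/6)*(2*a*(K:ℂ)+4*a+d)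 + (((K:ℂ)+2)*(b*((K:ℂ)+1)+e))*(((K:ℂ)+3)*(b*((K:ℂ)+2)+e)))))) := by
        linear_combination (4*(2*a*(K:ℂ)+3*a+d)*(2*a*(K:ℂ)+a+d)*(2*a*(K:ℂ)+2*a+d)^2*(2*a*(K:ℂ)+4*a+d)*k (K+1+1)) * E3
          + (-(2*(2*a*(K:ℂ)+a+d)*(2*a*(K:ℂ)+2*a+d)^2*(k (K+1+1))*(2*a*(K:ℂ)+4*a+d))) * K2a
          + (-(2*(2*a*(K:ℂ)+a+d)*(2*a*(K:ℂ)+2*a+d)^2*(k (K+1+1))*(((K:ℂ)+2)*(b*((K:ℂ)+1)+e)))) * K1a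
          + (2*(2*a*(K:ℂ)+3*a+d)*(2*a*(K:ℂ)+2*a+d)*(2*a*(K:ℂ)+4*a+d)*(k (K+1+1))*A*(2*a*(K:ℂ)+2*a+d)) * K2b
          + (2*(2*a*(K:ℂ)+3*a+d)*(2*a*(K:ℂ)+2*a+d)*(2*a*(K:ℂ)+4*a+d)*(k (K+1+1))*A*(((K:ℂ)+1)*(b*(K:ℂ)+e)) + 4*(2*a*(K:ℂ)+3*a+d)*(2*a*(K:ℂ)+a+d)*B*(2*a*(K:ℂ)+2*a+d)*(2*a*(K:ℂ)+4*a+d)*(k (K+1+1))) * K1b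
          + (2*(2*a*(K:ℂ)+3*a+d)*(2*a*(K:ℂ)+2*a+d)*(2*a*(K:ℂ)+4*a+d)*u*I*(k (K+1+1))*((c*((K:ℂ)+2)*((K:ℂ)+1) - a*((K:ℂ)+2)*((K:ℂ)+1)*(K:ℂ)*((K:ℂ)-1)/12 - d*((K:ℂ)+2)*((K:ℂ)+1)*(K:ℂ)/6)*(2*a*(K:ℂ)+2*a+d) + (((K:ℂ)+1)*(b*(K:ℂ)+e))*(((K:ℂ)+2)*(b*((K:ℂ)+1)+e)))) * hA2
          + (4*(2*a*(K:ℂ)+3*a+d)*(2*a*(K:ℂ)+a+d)*(((K:ℂ)+2)*(b*((K:ℂ)+1)+e))*u*I*(k (K+1+1))) * hB3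
          + (2*(2*a*(K:ℂ)+3*a+d)*(2*a*(K:ℂ)+2*a+d)*(2*a*(K:ℂ)+4*a+d)*u*(k (K+1+1))*(k (K+1+2))*((c*((K:ℂ)+2)*((K:ℂ)+1) - a*((K:ℂ)+2)*((K:ℂ)+1)*(K:ℂ)*((K:ℂ)-1)/12 - d*((K:ℂ)+2)*((K:ℂ)+1)*(K:ℂ)/6)*(2*a*(K:ℂ)+2*a+d) + (((K:ℂ)+1)*(b*(K:ℂ)+e))*(((K:ℂ)+2)*(b*((K:ℂ)+1)+e)))
              + 4*(2*a*(K:ℂ)+3*a+d)*(2*a*(K:ℂ)+a+d)*u*(k (K+1+1))*(k (K+1+2))*(((K:ℂ)+2)*(b*((K:ℂ)+1)+e))*((2*b*((K:ℂ)+2)^2 - 2*b*((K:ℂ)+2) - 2*e)*a + d*(2*b*((K:ℂ)+2)+e))) * AuxRec.hI2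
      have hC2 := mul_left_cancel₀ (mul_ne_zero hu0 (hk (K+1+1))) hC1
      have hDEN : 4 * (2*a*((K:ℂ)+1+1) - 2*a+d)^2 * (2*a*((K:ℂ)+1+1) - 3*a+d)
          * (2*a*((K:ℂ)+1+1)+d) * (2*a*((K:ℂ)+1+1)-a+d) ≠ 0 :=
        mul_ne_zero (mul_ne_zero (mul_ne_zero
          (mul_ne_zero (by norm_num) (pow_ne_zero 2 hf1)) hf4) hf2) hf3
      rw [eq_div_iff hDEN, div_mul_eq_mul_div, div_mul_eq_mul_div, eq_div_iff (hk (K+1))]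
      linear_combination hC2
end

section
/- Let α ∈ ℂ and n ≥ 1. For every x ∈ ℂ, (α + ix)·(𝒮(δg_n))(x) = n·i·g_n(x) − (n(n−1)/2)·i·g_{n−1}(x), where g_m(x) = ∏_{k=0}^{m−1}(α + k + ix). -/
open Complex Finset

/-- g_m(x) = (α + ix)_m = ∏_{k=0}^{m−1}(α + k + ix). -/
noncomputable def g (α : ℂ) (m : ℕ) (x : ℂ) : ℂ :=
  ∏ k ∈ Finset.range m, (α + k + I * x)

theorem stmt_10 (α : ℂ) (n : ℕ) (hn : 1 ≤ n) :
    ∀ x : ℂ, (α + I * x) * Sd (Dd (fun t => g α n t)) x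
      = (n : ℂ) * I * g α n x - ((n : ℂ) * ((n : ℂ) - 1) / 2) * I * g α (n-1) x := by
  obtain ⟨m, rfl⟩ : ∃ m, n = m + 1 := ⟨n - 1, (Nat.succ_pred_eq_of_pos hn).symm⟩
  intro x
  simp only [Sd, Dd, Nat.add_sub_cancel]
  have e1 : x + I/2 + I/2 = x + I := by ring
  have e2 : x + I/2 - I/2 = x := by ring
  have e3 : x - I/2 + I/2 = x := by ring
  have e4 : x - I/2 - I/2 = x - I := by ring
  rw [e1, e2, e3, e4]
  set β : ℂ := α + I * x with hβ
  set A : ℂ := g α m x with hA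
  have h1 : g α (m+1) (x + I) = A * (β - 1) := by
    simp only [g, hA, hβ]
    rw [Finset.prod_range_succ']
    congr 1
    · apply Finset.prod_congr rfl; intro k _; push_cast; linear_combination Complex.I_sq
    · push_cast; linear_combination Complex.I_sq
  have h3 : g α (m+1) x = A * (β + m) := by
    simp only [g, hA, hβ]
    rw [Finset.prod_range_succ]; ring
  have h2 : β * g α (m+1) (x - I) = A * (β + m) * (β + m + 1) := by
    have key : β * g α (m+1) (x - I) = g α (m+2) x := by
      simp only [g, hβ]
      rw [Finset.prod_range_succ' (n := m+1)]
      rw [mul_comm]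
      congr 1
      · apply Finset.prod_congr rfl; intro k _; push_cast; linear_combination -Complex.I_sq
      · push_cast; ring
    rw [key]
    simp only [g, hA, hβ]
    rw [Finset.prod_range_succ, Finset.prod_range_succ]
    push_cast; ring
  have hI : (I : ℂ) ≠ 0 := Complex.I_ne_zero
  simp only [div_eq_mul_inv, Complex.inv_I]
  push_cast
  linear_combination (-I*β/2)*h1 + (I/2)*h2 + (-((m:ℂ)+1)*I)*h3
end
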